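/- arXiv:1405.3843 — 5 statements merged into one kernel-verified Lean document; each statement's English description precedes it below -/
import Mathlib

section
/- For all real z with |z| ≤ 10, log((e^{-z/2} + e^{z/2})/2) ≥ z^2/16 - z^4/192. -/
/-!
Writing `(e^{-z/2} + e^{z/2})/2 = cosh (z/2)`, the bounds `cosh x ≥ 1 + x²/2` and `log c ≥ 1 - 1/c`
give `log cosh (z/2) ≥ u/(1+u)` with `u = z²/8`, and `u/(1+u) ≥ u/2 - u²/3` for `u ≥ 0` because
`u/(1+u) - u/2 + u²/3 = u(2u² - u + 3)/(6(1+u))`.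
-/

open Real

lemma one_add_sq_div_two_le_cosh (x : ℝ) : 1 + x ^ 2 / 2 ≤ cosh x := by
  have hsinh : |x / 2| ≤ |sinh (x / 2)| := by
    rw [abs_sinh]
    exact self_le_sinh_iff.2 (abs_nonneg _)
  have hcosh : cosh x = 1 + 2 * sinh (x / 2) ^ 2 :=
    calc cosh x = cosh (2 * (x / 2)) := by ring_nf
      _ = 1 + 2 * sinh (x / 2) ^ 2 := by rw [cosh_two_mul, cosh_sq]; ring
  nlinarith [sq_le_sq.2 hsinh]

lemma one_sub_inv_one_add_sq_div_two_le_log_cosh (x : ℝ) :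
    1 - (1 + x ^ 2 / 2)⁻¹ ≤ log (cosh x) :=
  calc 1 - (1 + x ^ 2 / 2)⁻¹ ≤ 1 - (cosh x)⁻¹ := by
        gcongr
        exact one_add_sq_div_two_le_cosh x
    _ ≤ log (cosh x) := one_sub_inv_le_log_of_pos (cosh_pos x)

lemma div_two_sub_sq_div_three_le_one_sub_inv {u : ℝ} (hu : 0 ≤ u) :
    u / 2 - u ^ 2 / 3 ≤ 1 - (1 + u)⁻¹ := by
  rw [show 1 - (1 + u)⁻¹ = u / (1 + u) by field_simp; ring, le_div_iff₀ (by linarith)]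
  nlinarith [mul_nonneg hu (sq_nonneg (u - 1 / 4))]

theorem log_cosh_lower_general (z : ℝ) :
    Real.log ((Real.exp (-z / 2) + Real.exp (z / 2)) / 2) ≥ z ^ 2 / 16 - z ^ 4 / 192 := by
  have hcosh : (exp (-z / 2) + exp (z / 2)) / 2 = cosh (z / 2) := by
    rw [cosh_eq]
    ring_nf
  rw [hcosh, ge_iff_le]
  calc z ^ 2 / 16 - z ^ 4 / 192 = (z / 2) ^ 2 / 2 / 2 - ((z / 2) ^ 2 / 2) ^ 2 / 3 := by ring
    _ ≤ 1 - (1 + (z / 2) ^ 2 / 2)⁻¹ := div_two_sub_sq_div_three_le_one_sub_inv (by positivity)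
    _ ≤ log (cosh (z / 2)) := one_sub_inv_one_add_sq_div_two_le_log_cosh (z / 2)

theorem log_cosh_lower (z : ℝ) (hz : |z| ≤ 10) :
    Real.log ((Real.exp (-z / 2) + Real.exp (z / 2)) / 2) ≥ z ^ 2 / 16 - z ^ 4 / 192 :=
  log_cosh_lower_general z
end

section
/- Let D ≥ 2 and β = 1/(8D). For all x ∈ [-1,1] and all w ∈ [-D, D], log(1 + e^{x w}) ≥ log 2 + (x w)/2 + (β/2)(x w)^2. -/
/-!
Factoring out `exp (t / 2)` gives `log (1 + exp t) = log 2 + t / 2 + log (cosh (t / 2))`, so the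
claim is the quadratic lower bound `log (cosh s) ≥ s ^ 2 / (4 * D)` for `|s| ≤ D / 2`. Near the
origin this follows from `cosh s ≥ 1 + s ^ 2 / 2`; for `|s| ≥ 1` from `cosh s ≥ exp |s| / 2`, since
`|s| - log 2 ≥ |s| / 8 ≥ s ^ 2 / (4 * D)` once `1 ≤ |s| ≤ D / 2`.
-/

open Real

namespace Real

lemma log_one_add_exp_eq (t : ℝ) :
    log (1 + exp t) = log 2 + t / 2 + log (cosh (t / 2)) := by
  have hfactor : 1 + exp t = 2 * cosh (t / 2) * exp (t / 2) := by
    have hsum : exp (t / 2) * exp (t / 2) + exp (-(t / 2)) * exp (t / 2) = exp t + 1 := by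
      rw [← exp_add, ← exp_add, add_halves, neg_add_cancel, exp_zero]
    rw [cosh_eq]
    linear_combination -hsum
  rw [hfactor, log_mul (by positivity) (exp_ne_zero _), log_mul two_ne_zero (cosh_pos _).ne',
    log_exp]
  ring

lemma one_add_sq_div_two_le_cosh (s : ℝ) : 1 + s ^ 2 / 2 ≤ cosh s := by
  wlog hs : 0 ≤ s generalizing s
  · simpa using this (-s) (by linarith)
  have hsinh : s / 2 ≤ sinh (s / 2) := self_le_sinh_iff.2 (by linarith)
  calc 1 + s ^ 2 / 2 = 1 + 2 * (s / 2) ^ 2 := by ring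
    _ ≤ 1 + 2 * sinh (s / 2) ^ 2 := by gcongr
    _ = cosh (2 * (s / 2)) := by rw [cosh_two_mul, cosh_sq']; ring
    _ = cosh s := by rw [mul_div_cancel₀ s two_ne_zero]

lemma sq_div_eight_le_log_cosh {s : ℝ} (hs : |s| ≤ 1) : s ^ 2 / 8 ≤ log (cosh s) := by
  have hs2 : s ^ 2 ≤ 1 := by nlinarith [sq_abs s, abs_nonneg s]
  calc s ^ 2 / 8 ≤ 2 * (s ^ 2 / 2) / (s ^ 2 / 2 + 2) := by
        rw [div_le_div_iff₀ (by norm_num) (by positivity)]; nlinarith [sq_nonneg s]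
    _ ≤ log (1 + s ^ 2 / 2) := le_log_one_add_of_nonneg (by positivity)
    _ ≤ log (cosh s) := log_le_log (by positivity) (one_add_sq_div_two_le_cosh s)

lemma abs_sub_log_two_le_log_cosh (s : ℝ) : |s| - log 2 ≤ log (cosh s) := by
  have h : exp |s| / 2 ≤ cosh s := by
    rw [cosh_eq]; gcongr; exact exp_abs_le s
  calc |s| - log 2 = log (exp |s| / 2) := by rw [log_div (exp_ne_zero _) two_ne_zero, log_exp]
    _ ≤ log (cosh s) := log_le_log (by positivity) h

lemma sq_div_le_log_cosh {D s : ℝ} (hD : 2 ≤ D) (hs : |s| ≤ D / 2) :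
    s ^ 2 / (4 * D) ≤ log (cosh s) := by
  rcases le_or_gt |s| 1 with hs1 | hs1
  · calc s ^ 2 / (4 * D) ≤ s ^ 2 / 8 := by gcongr; linarith
      _ ≤ log (cosh s) := sq_div_eight_le_log_cosh hs1
  · calc s ^ 2 / (4 * D) ≤ |s| / 8 := by
          rw [div_le_div_iff₀ (by positivity) (by norm_num), ← sq_abs]; nlinarith
      _ ≤ |s| - log 2 := by linarith [log_two_lt_d9]
      _ ≤ log (cosh s) := abs_sub_log_two_le_log_cosh s

end Real

theorem logistic_ge_mixed_approx (D : ℝ) (hD : 2 ≤ D) (x w : ℝ)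
    (hx : x ∈ Set.Icc (-1 : ℝ) 1) (hw : w ∈ Set.Icc (-D) D) :
    Real.log (1 + Real.exp (x * w)) ≥
      Real.log 2 + x * w / 2 + (1 / (8 * D)) / 2 * (x * w) ^ 2 := by
  have hxw : |x * w| ≤ D := by
    simpa [abs_mul] using mul_le_mul (abs_le.2 hx) (abs_le.2 hw) (abs_nonneg w) zero_le_one
  have hcosh := sq_div_le_log_cosh hD (s := x * w / 2) (by rw [abs_div, abs_two]; linarith)
  have hcoef : (1 / (8 * D)) / 2 * (x * w) ^ 2 = (x * w / 2) ^ 2 / (4 * D) := by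
    field_simp; ring
  rw [ge_iff_le, log_one_add_exp_eq, hcoef]
  linarith
end

section
/- Fix x with |x| ≤ 1/D and D ≥ 2, and let ℓ(w) = log(1 + e^{xw}). Then for all w, w_0 ∈ [-D, D]: ℓ(w) ≥ ℓ(w_0) + ℓ'(w_0)(w - w_0) + (1/(16D))·(ℓ'(w_0))^2·(w - w_0)^2. -/
/-!
On `[-D, D]` we have `|x u| ≤ 1`, so `σ(x u) ∈ [1/4, 3/4]` and
`ℓ''(u) = x² σ(x u) (1 - σ(x u)) ≥ x² / 16`: the loss is `x² / 16`-strongly convex there and lies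
above its tangent at `w₀` plus `x² / 32 · (w - w₀)²`. Since `|ℓ'(w₀)| = |x| σ(x w₀) ≤ |x|` and
`D ≥ 2`, the coefficient `ℓ'(w₀)² / (16 D)` is at most `x² / 32`.
-/

open Real Set

lemma ConvexOn.add_mul_sub_le_of_hasDerivAt {S : Set ℝ} {f : ℝ → ℝ} {f' x y : ℝ}
    (hf : ConvexOn ℝ S f) (hx : x ∈ S) (hy : y ∈ S) (hfx : HasDerivAt f f' x) :
    f x + f' * (y - x) ≤ f y := by
  rcases lt_trichotomy x y with hxy | rfl | hyx
  · have := hf.le_slope_of_hasDerivAt hx hy hxy hfx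
    rw [slope_def_field, le_div_iff₀ (sub_pos.2 hxy)] at this
    linarith
  · simp
  · have := hf.slope_le_of_hasDerivAt hy hx hyx hfx
    rw [slope_def_field, div_le_iff₀ (sub_pos.2 hyx)] at this
    linarith

/-- `f - m / 2 * (· - x) ^ 2` is convex on `S`, and its tangent at `x` is the tangent of `f`. -/
theorem add_mul_sub_add_sq_le_of_hasDerivAt2 {S : Set ℝ} (hS : Convex ℝ S) {f f' f'' : ℝ → ℝ}
    {m x y : ℝ} (hf : ∀ u ∈ S, HasDerivAt f (f' u) u) (hf' : ∀ u ∈ S, HasDerivAt f' (f'' u) u)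
    (hm : ∀ u ∈ S, m ≤ f'' u) (hx : x ∈ S) (hy : y ∈ S) :
    f x + f' x * (y - x) + m / 2 * (y - x) ^ 2 ≤ f y := by
  set g : ℝ → ℝ := fun u => f u - m / 2 * (u - x) ^ 2
  have hg : ∀ u ∈ S, HasDerivAt g (f' u - m * (u - x)) u := fun u hu =>
    ((hf u hu).fun_sub ((((hasDerivAt_id' u).sub_const x).fun_pow 2).const_mul (m / 2))).congr_deriv
      (by ring)
  have hg' : ∀ u ∈ S, HasDerivAt (fun u => f' u - m * (u - x)) (f'' u - m) u := fun u hu => by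
    simpa using (hf' u hu).fun_sub (((hasDerivAt_id u).sub_const x).const_mul m)
  have hconv : ConvexOn ℝ S g :=
    convexOn_of_hasDerivWithinAt2_nonneg hS
      (fun u hu => (hg u hu).continuousAt.continuousWithinAt)
      (fun u hu => (hg u (interior_subset hu)).hasDerivWithinAt)
      (fun u hu => (hg' u (interior_subset hu)).hasDerivWithinAt)
      (fun u hu => sub_nonneg.2 (hm u (interior_subset hu)))
  have := hconv.add_mul_sub_le_of_hasDerivAt hx hy (by simpa using hg x hx)
  simp only [g, sub_self] at this
  linarith

namespace Real

lemma sigmoid_eq_exp_div (u : ℝ) : sigmoid u = exp u / (1 + exp u) := by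
  rw [sigmoid_def, exp_neg]
  field_simp
  ring

lemma hasDerivAt_log_one_add_exp (u : ℝ) :
    HasDerivAt (fun u => log (1 + exp u)) (sigmoid u) u := by
  convert ((hasDerivAt_exp u).const_add 1).log (by positivity) using 1
  rw [sigmoid_eq_exp_div]

lemma sigmoid_mem_Icc_of_abs_le_one {u : ℝ} (hu : |u| ≤ 1) :
    sigmoid u ∈ Icc (1 / 4) (3 / 4) := by
  have hσ_one : sigmoid 1 ≤ 3 / 4 := by
    have : 1 / 3 ≤ exp (-1) := by
      rw [exp_neg, one_div]
      exact inv_anti₀ (exp_pos 1) (exp_one_lt_d9.le.trans (by norm_num))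
    rw [sigmoid_def, inv_le_comm₀ (by positivity) (by norm_num)]
    linarith
  have hσ_neg_one : 1 / 4 ≤ sigmoid (-1) := by
    rw [sigmoid_neg]
    linarith
  rw [abs_le] at hu
  exact ⟨hσ_neg_one.trans (sigmoid_le hu.1), (sigmoid_le hu.2).trans hσ_one⟩

lemma three_div_sixteen_le_sigmoid_mul_one_sub {u : ℝ} (hu : |u| ≤ 1) :
    3 / 16 ≤ sigmoid u * (1 - sigmoid u) := by
  obtain ⟨h₁, h₂⟩ := sigmoid_mem_Icc_of_abs_le_one hu
  nlinarith

end Real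

lemma hasDerivAt_log_one_add_exp_mul (x w : ℝ) :
    HasDerivAt (fun w => log (1 + exp (x * w))) (x * sigmoid (x * w)) w :=
  ((hasDerivAt_log_one_add_exp (x * w)).comp w ((hasDerivAt_id' w).const_mul x)).congr_deriv
    (by ring)

lemma hasDerivAt_mul_sigmoid_mul (x w : ℝ) :
    HasDerivAt (fun w => x * sigmoid (x * w))
      (x ^ 2 * (sigmoid (x * w) * (1 - sigmoid (x * w)))) w :=
  (((hasDerivAt_sigmoid (x * w)).comp w ((hasDerivAt_id' w).const_mul x)).const_mul x).congr_deriv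
    (by ring)

theorem logistic_expconcave_small_x (D x : ℝ) (hD : 2 ≤ D) (hx : |x| ≤ 1 / D)
    (w w₀ : ℝ) (hw : w ∈ Set.Icc (-D) D) (hw₀ : w₀ ∈ Set.Icc (-D) D) :
    Real.log (1 + Real.exp (x * w)) ≥
      Real.log (1 + Real.exp (x * w₀))
        + (x * Real.exp (x * w₀) / (1 + Real.exp (x * w₀))) * (w - w₀)
        + (1 / (16 * D)) * (x * Real.exp (x * w₀) / (1 + Real.exp (x * w₀))) ^ 2
            * (w - w₀) ^ 2 := by
  have hcurv : ∀ u ∈ Icc (-D) D,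
      x ^ 2 / 16 ≤ x ^ 2 * (sigmoid (x * u) * (1 - sigmoid (x * u))) := by
    intro u hu
    have hxu : |x * u| ≤ 1 := by
      rw [abs_mul]
      calc |x| * |u| ≤ 1 / D * D := by gcongr; exact abs_le.2 hu
        _ = 1 := one_div_mul_cancel (by linarith)
    nlinarith [three_div_sixteen_le_sigmoid_mul_one_sub hxu, sq_nonneg x]
  have hstrong := add_mul_sub_add_sq_le_of_hasDerivAt2 (convex_Icc (-D) D)
    (fun u _ => hasDerivAt_log_one_add_exp_mul x u) (fun u _ => hasDerivAt_mul_sigmoid_mul x u)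
    hcurv hw₀ hw
  have hcoef : 1 / (16 * D) * (x * sigmoid (x * w₀)) ^ 2 ≤ x ^ 2 / 16 / 2 := by
    have hσ : (x * sigmoid (x * w₀)) ^ 2 ≤ x ^ 2 := by
      rw [mul_pow]
      exact mul_le_of_le_one_right (sq_nonneg x)
        (pow_le_one₀ (sigmoid_nonneg _) (sigmoid_le_one _))
    calc 1 / (16 * D) * (x * sigmoid (x * w₀)) ^ 2 ≤ 1 / 32 * x ^ 2 :=
          mul_le_mul (one_div_le_one_div_of_le (by norm_num) (by linarith)) hσ
            (sq_nonneg _) (by norm_num)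
      _ = x ^ 2 / 16 / 2 := by ring
  rw [mul_div_assoc, ← sigmoid_eq_exp_div, ge_iff_le]
  nlinarith [sq_nonneg (w - w₀)]
end

section
/- Let p ∈ (0,1/2] and ε > 0 with p+ε ≤ 1. Any (possibly randomized) algorithm that, given m independent tosses of a coin with bias either p or p+ε, outputs the correct bias with probability at least 3/4 under both hypotheses, must use m ≥ p/(16 ε²) tosses. -/
open MeasureTheory

/-- The Bernoulli measure on `Bool` with bias `p` (probability of `true`). -/
noncomputable def ber (p : ℝ) : Measure Bool :=
  ENNReal.ofReal p • Measure.dirac true + ENNReal.ofReal (1 - p) • Measure.dirac false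

instance (p : ℝ) : IsFiniteMeasure (ber p) := by
  constructor
  simp only [ber, Measure.add_apply, Measure.smul_apply, smul_eq_mul,
    Measure.dirac_apply' _ MeasurableSet.univ]
  exact ENNReal.add_lt_top.2 ⟨by simp [ENNReal.mul_lt_top, ENNReal.ofReal_lt_top],
    by simp [ENNReal.mul_lt_top, ENNReal.ofReal_lt_top]⟩

/-!
A test that is right with probability at least `3/4` under both biases separates the `m`-fold
product weights `P`, `Q` in `ℓ¹`: `∑ |P - Q| ≥ 1`. By Cauchy–Schwarz,
`(∑ |P - Q|)² ≤ 4 (1 - B²)` where `B = ∑ √(P Q)` is the Bhattacharyya coefficient, and `B = b ^ m`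
for the coefficient `b` of a single toss. Hence `b ^ (2 m) ≤ 3/4`, so `m (1 - b²) ≥ 1/4` by
Bernoulli's inequality, while `p (1 - b²) ≤ ε²` for `p ≤ 1/2`. Together, `m ≥ p / (4 ε²)`.
-/

open Finset Real

noncomputable def bhattacharyya {ι : Type*} [Fintype ι] (P Q : ι → ℝ) : ℝ := ∑ i, √(P i * Q i)

lemma sum_mul_sub_sum_mul_le_half_sum_abs {ι : Type*} [Fintype ι] {P Q g : ι → ℝ}
    (hPQ : ∑ i, P i = ∑ i, Q i) (hg0 : ∀ i, 0 ≤ g i) (hg1 : ∀ i, g i ≤ 1) :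
    ∑ i, P i * g i - ∑ i, Q i * g i ≤ (∑ i, |P i - Q i|) / 2 := by
  have hcenter : ∑ i, P i * g i - ∑ i, Q i * g i = ∑ i, (P i - Q i) * (g i - 1 / 2) := by
    simp only [mul_sub, sub_mul, sum_sub_distrib, ← sum_mul, hPQ]
    ring
  rw [hcenter, sum_div]
  gcongr with i
  calc (P i - Q i) * (g i - 1 / 2) ≤ |P i - Q i| * |g i - 1 / 2| := by
        rw [← abs_mul]; exact le_abs_self _
    _ ≤ |P i - Q i| * (1 / 2) := by
        gcongr; exact abs_le.2 ⟨by linarith [hg0 i], by linarith [hg1 i]⟩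
    _ = |P i - Q i| / 2 := by ring

lemma sq_sum_abs_sub_le {ι : Type*} [Fintype ι] {P Q : ι → ℝ} (hP : ∀ i, 0 ≤ P i)
    (hQ : ∀ i, 0 ≤ Q i) (hP1 : ∑ i, P i = 1) (hQ1 : ∑ i, Q i = 1) :
    (∑ i, |P i - Q i|) ^ 2 ≤ 4 * (1 - bhattacharyya P Q ^ 2) := by
  have hsq (i : ι) (c : ℝ) :
      (√(P i) + c * √(Q i)) ^ 2 = P i + c ^ 2 * Q i + 2 * c * √(P i * Q i) := by
    rw [sqrt_mul (hP i)]
    linear_combination sq_sqrt (hP i) + c ^ 2 * sq_sqrt (hQ i)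
  calc (∑ i, |P i - Q i|) ^ 2
      ≤ (∑ i, (√(P i) + (-1) * √(Q i)) ^ 2) * ∑ i, (√(P i) + 1 * √(Q i)) ^ 2 := by
        refine sum_sq_le_sum_mul_sum_of_sq_le_mul _ (fun _ _ => sq_nonneg _)
          (fun _ _ => sq_nonneg _) fun i _ => le_of_eq ?_
        rw [sq_abs, ← mul_pow]
        congr 1
        linear_combination -sq_sqrt (hP i) + sq_sqrt (hQ i)
    _ = 4 * (1 - bhattacharyya P Q ^ 2) := by
        simp only [hsq, sum_add_distrib, ← mul_sum, hP1, hQ1, bhattacharyya]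
        ring

lemma bhattacharyya_pi {α : Type*} [Fintype α] {P Q : α → ℝ} (hP : ∀ x, 0 ≤ P x)
    (hQ : ∀ x, 0 ≤ Q x) (m : ℕ) :
    bhattacharyya (fun b : Fin m → α => ∏ i, P (b i)) (fun b => ∏ i, Q (b i))
      = bhattacharyya P Q ^ m := by
  simp only [bhattacharyya, Fintype.sum_pow, ← prod_mul_distrib]
  exact sum_congr rfl fun b _ => sqrt_prod _ fun i _ => mul_nonneg (hP _) (hQ _)

def berWeight (r : ℝ) (x : Bool) : ℝ := if x then r else 1 - r

lemma berWeight_nonneg {r : ℝ} (h0 : 0 ≤ r) (h1 : r ≤ 1) (x : Bool) : 0 ≤ berWeight r x := by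
  cases x <;> simp [berWeight] <;> linarith

lemma sum_berWeight (r : ℝ) : ∑ x, berWeight r x = 1 := by
  simp [berWeight]

lemma sum_prod_berWeight (r : ℝ) (m : ℕ) : ∑ b : Fin m → Bool, ∏ i, berWeight r (b i) = 1 := by
  rw [← Fintype.sum_pow, sum_berWeight, one_pow]

lemma mul_one_sub_bhattacharyya_berWeight_sq_le {p q : ℝ} (hp0 : 0 ≤ p) (hp2 : p ≤ 1 / 2)
    (hq0 : 0 ≤ q) (hq1 : q ≤ 1) :
    p * (1 - bhattacharyya (berWeight p) (berWeight q) ^ 2) ≤ (q - p) ^ 2 := by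
  simp only [bhattacharyya, Fintype.sum_bool, berWeight, if_true, Bool.false_eq_true, if_false]
  rw [sqrt_mul hp0, sqrt_mul (by linarith)]
  have hs := sq_sqrt hp0
  have ht := sq_sqrt hq0
  have hs' := sq_sqrt (show 0 ≤ 1 - p by linarith)
  have ht' := sq_sqrt (show 0 ≤ 1 - q by linarith)
  set s := √p
  set t := √q
  set s' := √(1 - p)
  set t' := √(1 - q)
  have lagrange : 1 - (s * t + s' * t') ^ 2 = (s * t' - s' * t) ^ 2 := by
    linear_combination -(t ^ 2 + t' ^ 2) * (hs + hs') - (ht + ht')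
  have hdiff : (s * t' - s' * t) ^ 2 * (s * t' + s' * t) ^ 2 = (q - p) ^ 2 := by
    have hD : (s * t') ^ 2 - (s' * t) ^ 2 = p - q := by
      linear_combination t' ^ 2 * hs + p * ht' - t ^ 2 * hs' - (1 - p) * ht
    rw [← mul_pow, mul_comm, ← sq_sub_sq, hD]
    ring
  have hsum : p ≤ (s * t' + s' * t) ^ 2 := by
    nlinarith [mul_nonneg (mul_nonneg (sqrt_nonneg p) (sqrt_nonneg (1 - q)))
      (mul_nonneg (sqrt_nonneg (1 - p)) (sqrt_nonneg q))]
  rw [lagrange, ← hdiff, mul_comm ((s * t' - s' * t) ^ 2)]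
  exact mul_le_mul_of_nonneg_right hsum (sq_nonneg _)

theorem div_four_le_mul_sq_sub_of_test {p q : ℝ} (hp0 : 0 ≤ p) (hp2 : p ≤ 1 / 2) (hq0 : 0 ≤ q)
    (hq1 : q ≤ 1) {m : ℕ} {g : (Fin m → Bool) → ℝ} (hg0 : ∀ b, 0 ≤ g b) (hg1 : ∀ b, g b ≤ 1)
    (hP : 3 / 4 ≤ ∑ b, (∏ i, berWeight p (b i)) * g b)
    (hQ : 3 / 4 ≤ ∑ b, (∏ i, berWeight q (b i)) * (1 - g b)) :
    p / 4 ≤ m * (q - p) ^ 2 := by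
  set P := fun b : Fin m → Bool => ∏ i, berWeight p (b i)
  set Q := fun b : Fin m → Bool => ∏ i, berWeight q (b i)
  set B := bhattacharyya (berWeight p) (berWeight q)
  have hP1 : ∑ b, P b = 1 := sum_prod_berWeight p m
  have hQ1 : ∑ b, Q b = 1 := sum_prod_berWeight q m
  have hTV : 1 ≤ ∑ b, |P b - Q b| := by
    have hsep := sum_mul_sub_sum_mul_le_half_sum_abs (hP1.trans hQ1.symm) hg0 hg1
    have hQg : ∑ b, Q b * (1 - g b) = 1 - ∑ b, Q b * g b := by
      simp only [mul_sub, mul_one, sum_sub_distrib, hQ1]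
    linarith
  have hpow : (B ^ 2) ^ m ≤ 3 / 4 := by
    have hHel := sq_sum_abs_sub_le (P := P) (Q := Q)
      (fun b => prod_nonneg fun i _ => berWeight_nonneg hp0 (by linarith) _)
      (fun b => prod_nonneg fun i _ => berWeight_nonneg hq0 hq1 _) hP1 hQ1
    rw [bhattacharyya_pi (berWeight_nonneg hp0 (by linarith)) (berWeight_nonneg hq0 hq1)] at hHel
    rw [← pow_mul, mul_comm, pow_mul]
    nlinarith
  have hbern : 1 / 4 ≤ m * (1 - B ^ 2) := by
    have := one_add_mul_sub_le_pow (a := B ^ 2) (by nlinarith) m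
    linarith
  calc p / 4 ≤ p * (m * (1 - B ^ 2)) := by nlinarith
    _ = m * (p * (1 - B ^ 2)) := by ring
    _ ≤ m * (q - p) ^ 2 := by
        gcongr
        exact mul_one_sub_bhattacharyya_berWeight_sq_le hp0 hp2 hq0 hq1

lemma ber_singleton (r : ℝ) (x : Bool) : ber r {x} = ENNReal.ofReal (berWeight r x) := by
  cases x <;> simp [ber, berWeight]

lemma pi_ber_singleton {r : ℝ} (h0 : 0 ≤ r) (h1 : r ≤ 1) {m : ℕ} (b : Fin m → Bool) :
    Measure.pi (fun _ : Fin m => ber r) {b} = ENNReal.ofReal (∏ i, berWeight r (b i)) := by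
  simp only [Measure.pi_singleton, ber_singleton,
    ENNReal.ofReal_prod_of_nonneg fun i _ => berWeight_nonneg h0 h1 _]

lemma MeasureTheory.Measure.prod_apply_of_fintype {ι Ω : Type*} [Fintype ι] [MeasurableSpace ι]
    [MeasurableSingletonClass ι] [MeasurableSpace Ω] (μ : Measure ι) (ρ : Measure Ω) [SFinite ρ]
    {S : Set (ι × Ω)} (hS : MeasurableSet S) :
    μ.prod ρ S = ∑ b, μ {b} * ρ (Prod.mk b ⁻¹' S) := by
  rw [Measure.prod_apply hS, lintegral_fintype]
  simp only [mul_comm]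

lemma pi_ber_prod_real_apply {r : ℝ} (h0 : 0 ≤ r) (h1 : r ≤ 1) {m : ℕ} {Ω : Type*}
    [MeasurableSpace Ω] (ρ : Measure Ω) [IsFiniteMeasure ρ] {S : Set ((Fin m → Bool) × Ω)}
    (hS : MeasurableSet S) :
    ((Measure.pi fun _ : Fin m => ber r).prod ρ).real S
      = ∑ b, (∏ i, berWeight r (b i)) * ρ.real (Prod.mk b ⁻¹' S) := by
  rw [measureReal_def, Measure.prod_apply_of_fintype _ _ hS,
    ENNReal.toReal_sum fun b _ => ENNReal.mul_ne_top (measure_ne_top _ _) (measure_ne_top _ _)]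
  simp only [ENNReal.toReal_mul, pi_ber_singleton h0 h1, measureReal_def,
    ENNReal.toReal_ofReal (prod_nonneg fun i _ => berWeight_nonneg h0 h1 _)]

/-- Theorem 2.1: any (possibly randomized) algorithm `A`, using `m` tosses of a coin with
bias either `p` or `p + ε` together with independent auxiliary randomness `ρ`, that outputs
the correct bias with probability at least `3/4` under both hypotheses (`false` meaning
"bias `p`" and `true` meaning "bias `p + ε`") must satisfy `m ≥ p / (16 ε²)`. -/
theorem coin_sample_complexity (p ε : ℝ) (hp : 0 < p) (hp2 : p ≤ 1 / 2)
    (hε : 0 < ε) (hpe : p + ε ≤ 1) (m : ℕ)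
    {Ω : Type} [MeasurableSpace Ω] (ρ : Measure Ω) [IsProbabilityMeasure ρ]
    (A : (Fin m → Bool) → Ω → Bool) (hA : Measurable (Function.uncurry A))
    (hcorrect_p :
      ((Measure.pi fun _ : Fin m => ber p).prod ρ) {x | A x.1 x.2 = false} ≥ 3 / 4)
    (hcorrect_q :
      ((Measure.pi fun _ : Fin m => ber (p + ε)).prod ρ) {x | A x.1 x.2 = true} ≥ 3 / 4) :
    (m : ℝ) ≥ p / (16 * ε ^ 2) := by
  have hmeas (c : Bool) : MeasurableSet {x : (Fin m → Bool) × Ω | A x.1 x.2 = c} :=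
    hA (measurableSet_singleton c)
  have hreal {μ : Measure ((Fin m → Bool) × Ω)} [IsFiniteMeasure μ] {S} (h : μ S ≥ 3 / 4) :
      3 / 4 ≤ μ.real S := by
    simpa [measureReal_def] using ENNReal.toReal_mono (measure_ne_top μ S) h
  have hP := hreal hcorrect_p
  have hQ := hreal hcorrect_q
  rw [pi_ber_prod_real_apply hp.le (by linarith) ρ (hmeas false)] at hP
  rw [pi_ber_prod_real_apply (by linarith) hpe ρ (hmeas true)] at hQ
  have hcompl (b : Fin m → Bool) : Prod.mk b ⁻¹' {x : (Fin m → Bool) × Ω | A x.1 x.2 = true}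
      = (Prod.mk b ⁻¹' {x | A x.1 x.2 = false})ᶜ := by
    ext ω; simp
  simp only [hcompl, probReal_compl_eq_one_sub (measurable_prodMk_left (hmeas false))] at hQ
  have key := div_four_le_mul_sq_sub_of_test hp.le hp2 (by linarith) hpe
    (fun _ => measureReal_nonneg) (fun _ => measureReal_le_one) hP hQ
  rw [add_sub_cancel_left] at key
  rw [ge_iff_le, div_le_iff₀ (by positivity)]
  linarith
end

section
/- Let real numbers v_1, …, v_T satisfy |v_t| ≤ r for all t, and let ε > 0. Then Σ_{t=1}^T v_t² / (Σ_{τ=1}^t v_τ² + ε) ≤ log(r² T/ε + 1). -/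
open Finset Real

theorem div_add_le_log_add_sub_log {x a : ℝ} (hx : 0 < x) (ha : 0 ≤ a) :
    a / (x + a) ≤ log (x + a) - log x := by
  have hxa : 0 < x + a := by positivity
  calc a / (x + a) = 1 - ((x + a) / x)⁻¹ := by field_simp; ring
    _ ≤ log ((x + a) / x) := one_sub_inv_le_log_of_pos (by positivity)
    _ = log (x + a) - log x := log_div hxa.ne' hx.ne'

theorem sum_div_partial_sum_add_le_log {a : ℕ → ℝ} {ε : ℝ} (ha : ∀ t, 0 ≤ a t) (hε : 0 < ε)
    (T : ℕ) :
    ∑ t ∈ range T, a t / (∑ τ ∈ range (t + 1), a τ + ε)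
      ≤ log ((∑ t ∈ range T, a t + ε) / ε) := by
  have hpos : ∀ t, 0 < ∑ τ ∈ range t, a τ + ε := fun t =>
    add_pos_of_nonneg_of_pos (sum_nonneg fun τ _ => ha τ) hε
  calc ∑ t ∈ range T, a t / (∑ τ ∈ range (t + 1), a τ + ε)
      ≤ ∑ t ∈ range T,
          (log (∑ τ ∈ range (t + 1), a τ + ε) - log (∑ τ ∈ range t, a τ + ε)) := by
        gcongr with t
        have := div_add_le_log_add_sub_log (hpos t) (ha t)
        rwa [sum_range_succ, add_right_comm]
    _ = log (∑ t ∈ range T, a t + ε) - log ε := by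
        rw [sum_range_sub (fun t => log (∑ τ ∈ range t, a τ + ε))]; simp
    _ = log ((∑ t ∈ range T, a t + ε) / ε) := (log_div (hpos T).ne' hε.ne').symm

theorem self_normalized_sum_bound (T : ℕ) (v : ℕ → ℝ) (r ε : ℝ) (hε : 0 < ε)
    (hr : ∀ t ∈ Finset.range T, |v t| ≤ r) :
    ∑ t ∈ Finset.range T, (v t) ^ 2 / ((∑ τ ∈ Finset.range (t + 1), (v τ) ^ 2) + ε)
      ≤ Real.log (r ^ 2 * T / ε + 1) := by
  have hsq : ∑ t ∈ range T, v t ^ 2 ≤ r ^ 2 * T := by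
    calc ∑ t ∈ range T, v t ^ 2 ≤ ∑ _t ∈ range T, r ^ 2 :=
          sum_le_sum fun t ht => sq_le_sq.mpr ((hr t ht).trans (le_abs_self r))
      _ = r ^ 2 * T := by simp [mul_comm]
  calc _ ≤ log ((∑ t ∈ range T, v t ^ 2 + ε) / ε) :=
        sum_div_partial_sum_add_le_log (fun t => sq_nonneg (v t)) hε T
    _ = log ((∑ t ∈ range T, v t ^ 2) / ε + 1) := by rw [add_div, div_self hε.ne']
    _ ≤ log (r ^ 2 * T / ε + 1) := by gcongr
end
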